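/- arXiv:2402.13921 — 4 statements merged into one kernel-verified Lean document; each statement's English description precedes it below -/
import Mathlib

section
/- For any smooth matrix-valued function X : ℝ → ℝ^{n×n} and smooth f : ℝ → ℝ, and any j ≥ 0, there exist functions q_{S,T} : ℝ → ℝ, indexed by pairs of subsets S, T ⊆ [n] with |S| = |T| ≥ n − j, such that the j-th derivative of det(X(u))·f(u) equals the sum over such S, T of det(X(u)_{S,T})·q_{S,T}(u), where X(u)_{S,T} is the submatrix of X(u) with rows in S and columns in T. -/
open Matrix Finset
section Aux

theorem hasDerivAt_det' {m : ℕ} (A : ℝ → Matrix (Fin m) (Fin m) ℝ)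
    (A' : Matrix (Fin m) (Fin m) ℝ) (t : ℝ)
    (h : ∀ a b, HasDerivAt (fun u => A u a b) (A' a b) t) :
    HasDerivAt (fun u => (A u).det) (∑ i, ((A t).updateRow i (A' i)).det) t := by
  have key : ∑ i, ((A t).updateRow i (A' i)).det
      = ∑ σ : Equiv.Perm (Fin m), (Equiv.Perm.sign σ : ℝ) *
          ∑ l, (∏ q ∈ Finset.univ.erase l, A t (σ q) q) * A' (σ l) l := by
    simp_rw [Matrix.det_apply']
    rw [Finset.sum_comm]
    refine Finset.sum_congr rfl fun σ _ => ?_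
    rw [mul_sum]
    rw [← Equiv.sum_comp σ.symm
      (fun l => (Equiv.Perm.sign σ : ℝ) * ((∏ q ∈ Finset.univ.erase l, A t (σ q) q) * A' (σ l) l))]
    refine Finset.sum_congr rfl fun i _ => ?_
    have h1 : ∏ l, (A t).updateRow i (A' i) (σ l) l
        = A' i (σ.symm i) * ∏ l ∈ Finset.univ.erase (σ.symm i), A t (σ l) l := by
      rw [← Finset.mul_prod_erase Finset.univ _ (Finset.mem_univ (σ.symm i))]
      congr 1
      · simp [Matrix.updateRow_self]
      · refine Finset.prod_congr rfl fun l hl => ?_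
        have : σ l ≠ i := fun h => (Finset.mem_erase.mp hl).1 (by simp [← h])
        rw [Matrix.updateRow_ne this]
    simp only [Equiv.symm_apply_apply, Equiv.apply_symm_apply] at *
    rw [h1]; ring
  rw [key]
  have : (fun u => (A u).det)
      = fun u => ∑ σ : Equiv.Perm (Fin m), (Equiv.Perm.sign σ : ℝ) * ∏ i, A u (σ i) i := by
    funext u; rw [Matrix.det_apply']
  rw [this]
  refine HasDerivAt.fun_sum fun σ _ => ?_
  have hp := HasDerivAt.fun_finsetProd (u := Finset.univ)
    (f := fun i u => A u (σ i) i) (f' := fun i => A' (σ i) i) (fun i _ => h (σ i) i)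
  simpa [smul_eq_mul] using hp.const_mul ((Equiv.Perm.sign σ : ℝ))

theorem deriv_det_minor {k : ℕ} (A : ℝ → Matrix (Fin (k+1)) (Fin (k+1)) ℝ)
    (hA : ∀ a b, ContDiff ℝ (⊤:ℕ∞) fun u => A u a b) (t : ℝ) :
    deriv (fun u => (A u).det) t
      = ∑ i : Fin (k+1), ∑ jj : Fin (k+1), (-1:ℝ)^((i:ℕ)+(jj:ℕ)) * deriv (fun u => A u i jj) t
          * ((A t).submatrix i.succAbove jj.succAbove).det := by
  have hd := hasDerivAt_det' A (fun a b => deriv (fun u => A u a b) t) t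
    (fun a b => ((hA a b).differentiable (by simp) t).hasDerivAt)
  rw [hd.deriv]
  refine Finset.sum_congr rfl fun i _ => ?_
  rw [Matrix.det_succ_row _ i]
  refine Finset.sum_congr rfl fun jj _ => ?_
  rw [Matrix.updateRow_self, Matrix.submatrix_updateRow_succAbove]

theorem orderEmbOfFin_cast'' {n : ℕ} {s : Finset (Fin n)} {k k' : ℕ} (h : s.card = k)
    (h' : s.card = k') (l : Fin k) :
    s.orderEmbOfFin h l = s.orderEmbOfFin h' (Fin.cast (h.symm.trans h') l) := by
  have := Finset.orderEmbOfFin_unique h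
    (f := fun l : Fin k => s.orderEmbOfFin h' (Fin.cast (h.symm.trans h') l))
    (fun x => Finset.orderEmbOfFin_mem s h' _)
    ((s.orderEmbOfFin h').strictMono.comp (fun a b hab => hab))
  exact (congrFun this l).symm

theorem det_submatrix_congr {n : ℕ} {S T : Finset (Fin n)} {k : ℕ} (hS : S.card = k)
    (hT : T.card = k) (h1 : T.card = S.card) (A : Matrix (Fin n) (Fin n) ℝ) :
    (A.submatrix (S.orderEmbOfFin rfl) (T.orderEmbOfFin h1)).det
      = (A.submatrix (S.orderEmbOfFin hS) (T.orderEmbOfFin hT)).det := by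
  have hrow : ∀ l : Fin S.card, S.orderEmbOfFin rfl l = S.orderEmbOfFin hS (Fin.cast hS l) :=
    fun l => orderEmbOfFin_cast'' rfl hS l
  have hcol : ∀ l : Fin S.card, T.orderEmbOfFin h1 l = T.orderEmbOfFin hT (Fin.cast hS l) :=
    fun l => orderEmbOfFin_cast'' h1 hT l
  have : A.submatrix (S.orderEmbOfFin rfl) (T.orderEmbOfFin h1)
      = (A.submatrix (S.orderEmbOfFin hS) (T.orderEmbOfFin hT)).submatrix
          (finCongr hS) (finCongr hS) := by
    ext a b
    simp [Matrix.submatrix_apply, hrow, hcol]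
  rw [this, Matrix.det_submatrix_equiv_self]

theorem orderEmbOfFin_erase {n : ℕ} {S : Finset (Fin n)} {k : ℕ} (hS : S.card = k+1)
    (i : Fin (k+1)) (h' : (S.erase (S.orderEmbOfFin hS i)).card = k) (l : Fin k) :
    (S.erase (S.orderEmbOfFin hS i)).orderEmbOfFin h' l
      = S.orderEmbOfFin hS (i.succAbove l) := by
  have := Finset.orderEmbOfFin_unique h'
    (f := fun l : Fin k => S.orderEmbOfFin hS (i.succAbove l))
    (fun x => Finset.mem_erase.mpr
      ⟨fun hc => (Fin.succAbove_ne i x) ((S.orderEmbOfFin hS).injective hc),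
        Finset.orderEmbOfFin_mem S hS _⟩)
    ((S.orderEmbOfFin hS).strictMono.comp (Fin.strictMono_succAbove i))
  exact (congrFun this l).symm

theorem card_erase_emb {n : ℕ} {S : Finset (Fin n)} {k : ℕ} (hS : S.card = k+1)
    (i : Fin (k+1)) : (S.erase (S.orderEmbOfFin hS i)).card = k := by
  rw [Finset.card_erase_of_mem (Finset.orderEmbOfFin_mem S hS i), hS]
  rfl

theorem contDiff_det_of_entries {m : ℕ} (A : ℝ → Matrix (Fin m) (Fin m) ℝ)
    (hA : ∀ a b, ContDiff ℝ (⊤:ℕ∞) fun u => A u a b) :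
    ContDiff ℝ (⊤:ℕ∞) fun u => (A u).det := by
  have : (fun u => (A u).det)
      = fun u => ∑ σ : Equiv.Perm (Fin m), (Equiv.Perm.sign σ : ℝ) * ∏ i, A u (σ i) i := by
    funext u; rw [Matrix.det_apply']
  rw [this]
  refine ContDiff.sum fun σ _ => ContDiff.mul contDiff_const ?_
  classical
  induction (Finset.univ : Finset (Fin m)) using Finset.induction with
  | empty => simpa using contDiff_const
  | insert a s hni ih =>
      simpa [Finset.prod_insert hni] using (hA (σ a) a).mul ih

def DetRep (n : ℕ) (X : ℝ → Matrix (Fin n) (Fin n) ℝ) (j : ℕ) (g : ℝ → ℝ) : Prop :=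
  ∃ q : Finset (Fin n) → Finset (Fin n) → ℝ → ℝ,
    (∀ S T, ContDiff ℝ (⊤:ℕ∞) (q S T)) ∧
    ∀ u, g u = ∑ S : Finset (Fin n), ∑ T : Finset (Fin n),
      if h : S.card = T.card ∧ n - j ≤ S.card then
        ((X u).submatrix (S.orderEmbOfFin rfl) (T.orderEmbOfFin h.1.symm)).det * q S T u
      else 0

variable {n : ℕ} {X : ℝ → Matrix (Fin n) (Fin n) ℝ} {j : ℕ}

theorem DetRep.congr {g g' : ℝ → ℝ} (h : ∀ u, g u = g' u) (hg : DetRep n X j g') : DetRep n X j g := by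
  obtain ⟨q, hq, e⟩ := hg
  exact ⟨q, hq, fun u => (h u).trans (e u)⟩

theorem DetRep.zero : DetRep n X j (fun _ => 0) := by
  refine ⟨fun _ _ _ => 0, fun _ _ => contDiff_const, fun u => ?_⟩
  symm
  refine Finset.sum_eq_zero fun S _ => Finset.sum_eq_zero fun T _ => ?_
  split <;> simp

theorem DetRep.add {g h : ℝ → ℝ} (hg : DetRep n X j g) (hh : DetRep n X j h) :
    DetRep n X j (fun u => g u + h u) := by
  obtain ⟨q1, hq1, e1⟩ := hg
  obtain ⟨q2, hq2, e2⟩ := hh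
  refine ⟨fun S T u => q1 S T u + q2 S T u, fun S T => (hq1 S T).add (hq2 S T), fun u => ?_⟩
  show g u + h u = _
  rw [e1 u, e2 u, ← Finset.sum_add_distrib]
  refine Finset.sum_congr rfl fun S _ => ?_
  rw [← Finset.sum_add_distrib]
  refine Finset.sum_congr rfl fun T _ => ?_
  by_cases hc : S.card = T.card ∧ n - j ≤ S.card
  · simp only [dif_pos hc, mul_add]
  · simp only [dif_neg hc, add_zero]

theorem DetRep.sum {ι : Type*} (s : Finset ι) (g : ι → ℝ → ℝ) (h : ∀ i ∈ s, DetRep n X j (g i)) :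
    DetRep n X j (fun u => ∑ i ∈ s, g i u) := by
  classical
  induction s using Finset.induction with
  | empty => simpa using DetRep.zero
  | insert a s hni ih =>
      simp only [Finset.sum_insert hni]
      exact DetRep.add (h a (Finset.mem_insert_self a s))
        (ih fun i hi => h i (Finset.mem_insert_of_mem hi))

theorem DetRep.single {k : ℕ} (S T : Finset (Fin n)) (hS : S.card = k) (hT : T.card = k)
    (hj : n - j ≤ k) (e f : Fin k → Fin n) (heS : ∀ l, e l ∈ S) (hem : StrictMono e)
    (hfT : ∀ l, f l ∈ T) (hfm : StrictMono f) (c : ℝ → ℝ) (hc : ContDiff ℝ (⊤:ℕ∞) c) :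
    DetRep n X j (fun u => ((X u).submatrix e f).det * c u) := by
  classical
  have he : e = S.orderEmbOfFin hS := Finset.orderEmbOfFin_unique hS heS hem
  have hf : f = T.orderEmbOfFin hT := Finset.orderEmbOfFin_unique hT hfT hfm
  subst he hf
  have hcond : S.card = T.card ∧ n - j ≤ S.card := ⟨hS.trans hT.symm, hS ▸ hj⟩
  refine ⟨fun A B u => if A = S ∧ B = T then c u else 0, ?_, fun u => ?_⟩
  · intro A B
    by_cases hAB : A = S ∧ B = T
    · simpa [hAB] using hc
    · simpa [hAB] using contDiff_const
  · have key : ∀ A B : Finset (Fin n),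
        (if h : A.card = B.card ∧ n - j ≤ A.card then
          ((X u).submatrix (A.orderEmbOfFin rfl) (B.orderEmbOfFin h.1.symm)).det *
            (if A = S ∧ B = T then c u else 0)
        else 0)
        = if A = S then (if B = T then
            ((X u).submatrix (S.orderEmbOfFin hS) (T.orderEmbOfFin hT)).det * c u else 0)
          else 0 := by
      intro A B
      by_cases hA : A = S
      · subst hA
        by_cases hB : B = T
        · subst hB
          rw [if_pos rfl, if_pos rfl, dif_pos hcond, if_pos ⟨rfl, rfl⟩,
            det_submatrix_congr hS hT hcond.1.symm]
        · rw [if_pos rfl, if_neg hB]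
          split
          · simp [hB]
          · rfl
      · rw [if_neg hA]
        split
        · simp [hA]
        · rfl
    simp_rw [key]
    simp

def tm (n : ℕ) (X : ℝ → Matrix (Fin n) (Fin n) ℝ) (j : ℕ)
    (q : Finset (Fin n) → Finset (Fin n) → ℝ → ℝ) (S T : Finset (Fin n)) : ℝ → ℝ := fun u =>
  if h : S.card = T.card ∧ n - j ≤ S.card then
    ((X u).submatrix (S.orderEmbOfFin rfl) (T.orderEmbOfFin h.1.symm)).det * q S T u
  else 0

theorem tm_smooth (hX : ∀ a b, ContDiff ℝ (⊤:ℕ∞) fun u => X u a b)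
    (q : Finset (Fin n) → Finset (Fin n) → ℝ → ℝ) (hq : ∀ S T, ContDiff ℝ (⊤:ℕ∞) (q S T))
    (S T : Finset (Fin n)) : ContDiff ℝ (⊤:ℕ∞) (tm n X j q S T) := by
  unfold tm
  by_cases hc : S.card = T.card ∧ n - j ≤ S.card
  · simp only [dif_pos hc]
    exact (contDiff_det_of_entries _ (fun a b => hX _ _)).mul (hq S T)
  · simp only [dif_neg hc]
    exact contDiff_const

theorem DetRep.derivStep (hX : ∀ a b, ContDiff ℝ (⊤:ℕ∞) fun u => X u a b)
    {g : ℝ → ℝ} (hg : DetRep n X j g) : DetRep n X (j+1) (fun u => deriv g u) := by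
  classical
  obtain ⟨q, hq, e⟩ := hg
  have hgeq : g = fun u => ∑ p : Finset (Fin n) × Finset (Fin n), tm n X j q p.1 p.2 u := by
    funext u; rw [e u]
    exact (Fintype.sum_prod_type (fun p : Finset (Fin n) × Finset (Fin n) =>
      tm n X j q p.1 p.2 u)).symm
  have hdiff : ∀ (p : Finset (Fin n) × Finset (Fin n)) u,
      DifferentiableAt ℝ (tm n X j q p.1 p.2) u :=
    fun p u => ((tm_smooth hX q hq p.1 p.2).differentiable (by simp)) u
  have hderiv : ∀ u, deriv g u
      = ∑ p : Finset (Fin n) × Finset (Fin n), deriv (tm n X j q p.1 p.2) u := by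
    intro u; rw [hgeq]; exact deriv_fun_sum (fun p _ => hdiff p u)
  refine DetRep.congr hderiv (DetRep.sum Finset.univ _ (fun p _ => ?_))
  by_cases hc : p.1.card = p.2.card ∧ n - j ≤ p.1.card
  case neg =>
    have h0 : tm n X j q p.1 p.2 = fun _ => 0 := funext fun u => dif_neg hc
    exact DetRep.congr (fun u => by rw [h0]; simp) DetRep.zero
  case pos =>
    obtain ⟨hcc, hcj⟩ := hc
    have htm : tm n X j q p.1 p.2 = fun u =>
        ((X u).submatrix (p.1.orderEmbOfFin rfl) (p.2.orderEmbOfFin hcc.symm)).det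
          * q p.1 p.2 u := funext fun u => dif_pos ⟨hcc, hcj⟩
    have hD : ContDiff ℝ (⊤:ℕ∞) (fun u =>
        ((X u).submatrix (p.1.orderEmbOfFin rfl) (p.2.orderEmbOfFin hcc.symm)).det) :=
      contDiff_det_of_entries _ (fun a b => hX _ _)
    have hqd : ContDiff ℝ (⊤:ℕ∞) (deriv (q p.1 p.2)) :=
      (contDiff_infty_iff_deriv.mp (hq p.1 p.2)).2
    have hder : ∀ u, deriv (tm n X j q p.1 p.2) u
        = deriv (fun u => ((X u).submatrix (p.1.orderEmbOfFin rfl)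
            (p.2.orderEmbOfFin hcc.symm)).det) u * q p.1 p.2 u
          + ((X u).submatrix (p.1.orderEmbOfFin rfl) (p.2.orderEmbOfFin hcc.symm)).det
            * deriv (q p.1 p.2) u := by
      intro u
      rw [htm]
      exact deriv_fun_mul (hD.differentiable (by simp) u)
        ((hq p.1 p.2).differentiable (by simp) u)
    refine DetRep.congr hder (DetRep.add ?_ ?_)
    case refine_2 =>
      exact DetRep.single p.1 p.2 rfl hcc.symm
        (le_trans (Nat.sub_le_sub_left (Nat.le_succ j) n) hcj) _ _
        (fun l => Finset.orderEmbOfFin_mem _ _ _) (p.1.orderEmbOfFin rfl).strictMono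
        (fun l => Finset.orderEmbOfFin_mem _ _ _) (p.2.orderEmbOfFin hcc.symm).strictMono
        _ hqd
    case refine_1 =>
      rcases eq_or_ne p.1.card 0 with k0 | kne
      · haveI : IsEmpty (Fin p.1.card) := by rw [k0]; infer_instance
        have hD1 : (fun u => ((X u).submatrix (p.1.orderEmbOfFin rfl)
            (p.2.orderEmbOfFin hcc.symm)).det) = fun _ => (1:ℝ) := by
          funext u; exact Matrix.det_isEmpty
        refine DetRep.congr (fun u => ?_) DetRep.zero
        rw [hD1, deriv_const]; ring
      · obtain ⟨k, k0⟩ := Nat.exists_eq_succ_of_ne_zero kne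
        have hT' : p.2.card = k + 1 := by omega
        have hDA : (fun u => ((X u).submatrix (p.1.orderEmbOfFin rfl)
              (p.2.orderEmbOfFin hcc.symm)).det)
            = fun u => ((X u).submatrix (p.1.orderEmbOfFin k0) (p.2.orderEmbOfFin hT')).det := by
          funext u; exact det_submatrix_congr k0 hT' hcc.symm _
        rw [hDA]
        have hJ : ∀ t, _root_.deriv (fun u => ((X u).submatrix (p.1.orderEmbOfFin k0)
              (p.2.orderEmbOfFin hT')).det) t
            = ∑ i : Fin (k+1), ∑ jj : Fin (k+1), (-1:ℝ)^((i:ℕ)+(jj:ℕ)) *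
                _root_.deriv (fun u => (X u).submatrix (p.1.orderEmbOfFin k0)
                  (p.2.orderEmbOfFin hT') i jj) t *
                (((X t).submatrix (p.1.orderEmbOfFin k0)
                  (p.2.orderEmbOfFin hT')).submatrix i.succAbove jj.succAbove).det := by
          intro t
          exact deriv_det_minor
            (fun u => (X u).submatrix (p.1.orderEmbOfFin k0) (p.2.orderEmbOfFin hT'))
            (fun a b => by simpa using hX (p.1.orderEmbOfFin k0 a) (p.2.orderEmbOfFin hT' b)) t
        refine DetRep.congr (g' := fun u => ∑ pr : Fin (k+1) × Fin (k+1),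
            ((X u).submatrix (fun l => p.1.orderEmbOfFin k0 (pr.1.succAbove l))
              (fun l => p.2.orderEmbOfFin hT' (pr.2.succAbove l))).det *
            ((-1:ℝ)^((pr.1:ℕ)+(pr.2:ℕ)) *
              _root_.deriv (fun u => X u (p.1.orderEmbOfFin k0 pr.1)
                (p.2.orderEmbOfFin hT' pr.2)) u *
              q p.1 p.2 u)) (fun u => ?_) (DetRep.sum _ _ (fun pr _ => ?_))
        · beta_reduce
          rw [hJ u, Fintype.sum_prod_type, Finset.sum_mul]
          refine Finset.sum_congr rfl fun i _ => ?_
          rw [Finset.sum_mul]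
          refine Finset.sum_congr rfl fun jj _ => ?_
          rw [Matrix.submatrix_submatrix]
          simp only [Function.comp_def, Matrix.submatrix_apply]
          ring
        · refine DetRep.single (p.1.erase (p.1.orderEmbOfFin k0 pr.1))
            (p.2.erase (p.2.orderEmbOfFin hT' pr.2))
            (card_erase_emb k0 pr.1) (card_erase_emb hT' pr.2) (by omega) _ _
            (fun l => Finset.mem_erase.mpr
              ⟨fun hcq => Fin.succAbove_ne pr.1 l ((p.1.orderEmbOfFin k0).injective hcq),
                Finset.orderEmbOfFin_mem _ _ _⟩)
            ((p.1.orderEmbOfFin k0).strictMono.comp (Fin.strictMono_succAbove pr.1))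
            (fun l => Finset.mem_erase.mpr
              ⟨fun hcq => Fin.succAbove_ne pr.2 l ((p.2.orderEmbOfFin hT').injective hcq),
                Finset.orderEmbOfFin_mem _ _ _⟩)
            ((p.2.orderEmbOfFin hT').strictMono.comp (Fin.strictMono_succAbove pr.2))
            _ ((contDiff_const.mul (contDiff_infty_iff_deriv.mp (hX _ _)).2).mul (hq p.1 p.2))

end Aux

/-- For smooth X : ℝ → Matrix (Fin n) (Fin n) ℝ and smooth f : ℝ → ℝ, and any j,
there exist functions q_{S,T} : ℝ → ℝ indexed by pairs of subsets S,T ⊆ Fin n with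
|S| = |T| ≥ n − j such that the j-th derivative of det(X(u))·f(u) equals
∑_{S,T} det(X(u)_{S,T})·q_{S,T}(u). -/
theorem stmt1 (n j : ℕ) (X : ℝ → Matrix (Fin n) (Fin n) ℝ) (f : ℝ → ℝ)
    (hX : ∀ a b : Fin n, ContDiff ℝ (⊤ : ℕ∞) (fun u => X u a b))
    (hf : ContDiff ℝ (⊤ : ℕ∞) f) :
    ∃ q : Finset (Fin n) → Finset (Fin n) → ℝ → ℝ,
      ∀ u : ℝ,
        iteratedDeriv j (fun v => (X v).det * f v) u =
          ∑ S : Finset (Fin n), ∑ T : Finset (Fin n),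
            if h : S.card = T.card ∧ n - j ≤ S.card then
              ((X u).submatrix (S.orderEmbOfFin rfl) (T.orderEmbOfFin h.1.symm)).det
                * q S T u
            else 0 := by
  have hX' : ∀ a b, ContDiff ℝ (⊤:ℕ∞) fun u => X u a b := fun a b => (hX a b).of_le (by simp)
  have main : ∀ m : ℕ, DetRep n X m (iteratedDeriv m fun v => (X v).det * f v) := by
    intro m
    induction m with
    | zero =>
        refine DetRep.congr
          (g' := fun u => ((X u).submatrix (id : Fin n → Fin n) id).det * f u)
          (fun u => ?_) ?_
        · rw [iteratedDeriv_zero]; simp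
        · exact DetRep.single Finset.univ Finset.univ (by simp) (by simp) (by simp) id id
            (fun l => Finset.mem_univ l) strictMono_id (fun l => Finset.mem_univ l)
            strictMono_id f (hf.of_le (by simp))
    | succ m ih =>
        refine DetRep.congr (fun u => ?_) (DetRep.derivStep hX' ih)
        rw [iteratedDeriv_succ]
  obtain ⟨q, hq, e⟩ := main j
  exact ⟨q, e⟩
end

section
/- Suppose H(t) is a family of symmetric n×n real matrices depending continuously on t ∈ [0, t*], such that H(0) is positive semidefinite. Then the number of negative eigenvalues of H(t*) (counted with multiplicity) is at most the sum over t ∈ [0, t*) at which H(t) is singular of the dimension of the kernel of H(t), provided this set of singular times is finite. -/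
/-!
Write `n₋(A)` for the number of negative eigenvalues of a symmetric matrix `A`. The quadratic
form of `A` is negative definite on the span of the negative eigenvectors of `A`, and by
compactness of the unit sphere this persists for every `B` near `A`; such a subspace meets the
span of the nonnegative eigenvectors of `B` trivially, so `n₋(A) ≤ n₋(B)`. Running the same
argument with the positive eigenvectors of `A` gives `n₋(B) ≤ n₋(A) + dim ker A`. Hence
`t ↦ n₋(H t)` is constant on every interval free of singular times and rises by at most
`dim ker H s` across a singular time `s`; induction on the singular times, starting from
`n₋(H 0) = 0`, gives the bound.
-/

open Matrix Module Finset WithLp Filter Topology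

theorem Submodule.finrank_add_finrank_le_of_forall_neg_of_nonneg {K E : Type*} [DivisionRing K]
    [AddCommGroup E] [Module K E] [FiniteDimensional K E] {Q : E → ℝ} {V W : Submodule K E}
    (hV : ∀ x ∈ V, x ≠ 0 → Q x < 0) (hW : ∀ x ∈ W, x ≠ 0 → 0 ≤ Q x) :
    finrank K V + finrank K W ≤ finrank K E := by
  refine Submodule.finrank_add_finrank_le_of_disjoint (Submodule.disjoint_def.2 fun x hxV hxW => ?_)
  by_contra hx
  exact (hV x hxV hx).not_ge (hW x hxW hx)

theorem Submodule.eventually_forall_ne_zero_neg {X E : Type*} [TopologicalSpace X]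
    [NormedAddCommGroup E] [NormedSpace ℝ E] [FiniteDimensional ℝ E] {F : X → E → ℝ}
    (hF : Continuous (Function.uncurry F)) (hsmul : ∀ a (c : ℝ) v, F a (c • v) = c ^ 2 * F a v)
    (V : Submodule ℝ E) {a₀ : X} (h : ∀ v ∈ V, v ≠ 0 → F a₀ v < 0) :
    ∀ᶠ a in 𝓝 a₀, ∀ v ∈ V, v ≠ 0 → F a v < 0 := by
  have hK : IsCompact (Metric.sphere (0 : E) 1 ∩ V) :=
    (isCompact_sphere 0 1).inter_right V.closed_of_finiteDimensional
  have hsphere : ∀ᶠ a in 𝓝 a₀, ∀ u ∈ Metric.sphere (0 : E) 1 ∩ V, F a u < 0 :=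
    hK.eventually_forall_of_forall_eventually fun u hu =>
      (hF.tendsto (a₀, u)).eventually
        (eventually_lt_nhds (h u hu.2 (ne_zero_of_mem_unit_sphere ⟨u, hu.1⟩)))
  filter_upwards [hsphere] with a ha v hv hv0
  have hu : ‖v‖⁻¹ • v ∈ Metric.sphere (0 : E) 1 ∩ V :=
    ⟨by simpa using norm_smul_inv_norm (𝕜 := ℝ) hv0, V.smul_mem _ hv⟩
  have hv_eq : v = ‖v‖ • ‖v‖⁻¹ • v := by rw [smul_inv_smul₀ (norm_ne_zero_iff.2 hv0)]
  rw [hv_eq, hsmul]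
  exact mul_neg_of_pos_of_neg (by positivity) (ha _ hu)

namespace Matrix

variable {ι : Type*} [Fintype ι]

theorem continuous_dotProduct_mulVec :
    Continuous (Function.uncurry fun (A : Matrix ι ι ℝ) (x : EuclideanSpace ℝ ι) =>
      ofLp x ⬝ᵥ A *ᵥ ofLp x) := by
  simp only [Function.uncurry_def, dotProduct, mulVec]
  fun_prop

theorem dotProduct_mulVec_smul_smul (A : Matrix ι ι ℝ) (c : ℝ) (x : EuclideanSpace ℝ ι) :
    ofLp (c • x) ⬝ᵥ A *ᵥ ofLp (c • x) = c ^ 2 * (ofLp x ⬝ᵥ A *ᵥ ofLp x) := by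
  simp only [ofLp_smul, mulVec_smul, dotProduct_smul, smul_dotProduct, smul_eq_mul]
  ring

theorem eventually_forall_dotProduct_mulVec_neg {A : Matrix ι ι ℝ}
    {V : Submodule ℝ (EuclideanSpace ℝ ι)} (h : ∀ x ∈ V, x ≠ 0 → ofLp x ⬝ᵥ A *ᵥ ofLp x < 0) :
    ∀ᶠ B in 𝓝 A, ∀ x ∈ V, x ≠ 0 → ofLp x ⬝ᵥ B *ᵥ ofLp x < 0 :=
  Submodule.eventually_forall_ne_zero_neg
    (F := fun (B : Matrix ι ι ℝ) (x : EuclideanSpace ℝ ι) => ofLp x ⬝ᵥ B *ᵥ ofLp x)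
    continuous_dotProduct_mulVec dotProduct_mulVec_smul_smul V h

theorem eventually_forall_dotProduct_mulVec_pos {A : Matrix ι ι ℝ}
    {V : Submodule ℝ (EuclideanSpace ℝ ι)} (h : ∀ x ∈ V, x ≠ 0 → 0 < ofLp x ⬝ᵥ A *ᵥ ofLp x) :
    ∀ᶠ B in 𝓝 A, ∀ x ∈ V, x ≠ 0 → 0 < ofLp x ⬝ᵥ B *ᵥ ofLp x := by
  have := Submodule.eventually_forall_ne_zero_neg
    (F := fun (B : Matrix ι ι ℝ) (x : EuclideanSpace ℝ ι) => -(ofLp x ⬝ᵥ B *ᵥ ofLp x))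
    continuous_dotProduct_mulVec.neg
    (fun B c x => by simp only [dotProduct_mulVec_smul_smul, mul_neg])
    V (a₀ := A) (by simpa using h)
  simpa using this

namespace IsHermitian

variable [DecidableEq ι] {A : Matrix ι ι ℝ} (hA : A.IsHermitian)

noncomputable def negIndex : ℕ := #{i | hA.eigenvalues i < 0}

noncomputable def posIndex : ℕ := #{i | 0 < hA.eigenvalues i}

theorem negIndex_add_finrank_ker_add_posIndex :
    hA.negIndex + finrank ℝ (LinearMap.ker A.mulVecLin) + hA.posIndex = Fintype.card ι := by
  have hrank : A.rank = hA.negIndex + hA.posIndex := by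
    rw [hA.rank_eq_card_non_zero_eigs, Fintype.card_subtype, negIndex, posIndex,
      ← card_union_of_disjoint (disjoint_filter.2 fun i _ h => h.not_gt), ← filter_or]
    simp only [ne_iff_lt_or_gt]
  have := LinearMap.finrank_range_add_finrank_ker A.mulVecLin
  rw [← Matrix.rank, hrank, finrank_fintype_fun_eq_card] at this
  omega

theorem mulVec_eq_sum (x : EuclideanSpace ℝ ι) :
    A *ᵥ ofLp x = ∑ i, (hA.eigenvalues i * hA.eigenvectorBasis.repr x i) •
      ofLp (hA.eigenvectorBasis i) := by
  conv_lhs => rw [← hA.eigenvectorBasis.sum_repr x]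
  simp [ofLp_sum, mulVec_sum, mulVec_smul, mulVec_eigenvectorBasis, smul_smul, mul_comm]

theorem dotProduct_mulVec_eq_sum (x : EuclideanSpace ℝ ι) :
    ofLp x ⬝ᵥ A *ᵥ ofLp x = ∑ i, hA.eigenvalues i * hA.eigenvectorBasis.repr x i ^ 2 := by
  rw [hA.mulVec_eq_sum]
  simp only [dotProduct_sum, dotProduct_smul, hA.eigenvectorBasis.repr_apply_apply,
    EuclideanSpace.inner_eq_star_dotProduct, star_trivial, smul_eq_mul]
  refine Finset.sum_congr rfl fun i _ => ?_
  ring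

noncomputable def eigenvectorSpan (s : Set ℝ) : Submodule ℝ (EuclideanSpace ℝ ι) :=
  Submodule.span ℝ (hA.eigenvectorBasis '' {i | hA.eigenvalues i ∈ s})

theorem mem_eigenvectorSpan {s : Set ℝ} {x : EuclideanSpace ℝ ι} :
    x ∈ hA.eigenvectorSpan s ↔ ∀ i, hA.eigenvectorBasis.repr x i ≠ 0 → hA.eigenvalues i ∈ s := by
  rw [eigenvectorSpan, ← hA.eigenvectorBasis.coe_toBasis, Basis.mem_span_image]
  simp [Set.subset_def]

theorem finrank_eigenvectorSpan (s : Set ℝ) [DecidablePred (· ∈ s)] :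
    finrank ℝ (hA.eigenvectorSpan s) = #{i | hA.eigenvalues i ∈ s} := by
  rw [eigenvectorSpan, Set.image_eq_range, finrank_span_eq_card, Fintype.card_subtype]
  · rfl
  · exact hA.eigenvectorBasis.orthonormal.linearIndependent.comp _ Subtype.val_injective

theorem exists_repr_ne_zero {x : EuclideanSpace ℝ ι} (hx : x ≠ 0) :
    ∃ i, hA.eigenvectorBasis.repr x i ≠ 0 := by
  by_contra! h
  exact hx (hA.eigenvectorBasis.repr.map_eq_zero_iff.1 (by ext i; exact h i))

theorem dotProduct_mulVec_nonneg_of_mem {x : EuclideanSpace ℝ ι}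
    (hx : x ∈ hA.eigenvectorSpan (Set.Ici 0)) : 0 ≤ ofLp x ⬝ᵥ A *ᵥ ofLp x := by
  rw [hA.dotProduct_mulVec_eq_sum]
  refine sum_nonneg fun i _ => ?_
  by_cases hi : hA.eigenvectorBasis.repr x i = 0
  · simp [hi]
  · exact mul_nonneg ((hA.mem_eigenvectorSpan.1 hx) i hi) (sq_nonneg _)

theorem dotProduct_mulVec_pos_of_mem {x : EuclideanSpace ℝ ι}
    (hx : x ∈ hA.eigenvectorSpan (Set.Ioi 0)) (hx0 : x ≠ 0) : 0 < ofLp x ⬝ᵥ A *ᵥ ofLp x := by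
  have hpos : ∀ i, hA.eigenvectorBasis.repr x i ≠ 0 →
      0 < hA.eigenvalues i * hA.eigenvectorBasis.repr x i ^ 2 :=
    fun i hi => mul_pos ((hA.mem_eigenvectorSpan.1 hx) i hi) (by positivity)
  obtain ⟨i, hi⟩ := hA.exists_repr_ne_zero hx0
  rw [hA.dotProduct_mulVec_eq_sum]
  refine sum_pos' (fun j _ => ?_) ⟨i, mem_univ i, hpos i hi⟩
  by_cases hj : hA.eigenvectorBasis.repr x j = 0
  · simp [hj]
  · exact (hpos j hj).le

theorem dotProduct_mulVec_neg_of_mem {x : EuclideanSpace ℝ ι}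
    (hx : x ∈ hA.eigenvectorSpan (Set.Iio 0)) (hx0 : x ≠ 0) : ofLp x ⬝ᵥ A *ᵥ ofLp x < 0 := by
  have hneg : ∀ i, hA.eigenvectorBasis.repr x i ≠ 0 →
      hA.eigenvalues i * hA.eigenvectorBasis.repr x i ^ 2 < 0 :=
    fun i hi => mul_neg_of_neg_of_pos ((hA.mem_eigenvectorSpan.1 hx) i hi) (by positivity)
  obtain ⟨i, hi⟩ := hA.exists_repr_ne_zero hx0
  rw [hA.dotProduct_mulVec_eq_sum]
  refine sum_neg' (fun j _ => ?_) ⟨i, mem_univ i, hneg i hi⟩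
  by_cases hj : hA.eigenvectorBasis.repr x j = 0
  · simp [hj]
  · exact (hneg j hj).le

theorem eventually_negIndex_le :
    ∀ᶠ B in 𝓝 A, ∀ hB : B.IsHermitian, hA.negIndex ≤ hB.negIndex := by
  filter_upwards [eventually_forall_dotProduct_mulVec_neg fun _ => hA.dotProduct_mulVec_neg_of_mem]
    with B hneg hB
  have hdim := Submodule.finrank_add_finrank_le_of_forall_neg_of_nonneg hneg
    fun x hx _ => hB.dotProduct_mulVec_nonneg_of_mem hx
  have hsplit := card_filter_add_card_filter_not (s := univ) (fun i => hB.eigenvalues i < 0)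
  simp only [finrank_eigenvectorSpan, finrank_euclideanSpace, Set.mem_Iio, Set.mem_Ici, not_lt,
    card_univ] at hdim hsplit
  exact Nat.le_of_add_le_add_right (hsplit ▸ hdim)

theorem eventually_negIndex_le_negIndex_add_finrank_ker :
    ∀ᶠ B in 𝓝 A, ∀ hB : B.IsHermitian,
      hB.negIndex ≤ hA.negIndex + finrank ℝ (LinearMap.ker A.mulVecLin) := by
  filter_upwards [eventually_forall_dotProduct_mulVec_pos fun _ => hA.dotProduct_mulVec_pos_of_mem]
    with B hpos hB
  have hdim := Submodule.finrank_add_finrank_le_of_forall_neg_of_nonneg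
    (fun _ => hB.dotProduct_mulVec_neg_of_mem) fun x hx hx0 => (hpos x hx hx0).le
  simp only [finrank_eigenvectorSpan, finrank_euclideanSpace, Set.mem_Iio, Set.mem_Ioi] at hdim
  change hB.negIndex + hA.posIndex ≤ Fintype.card ι at hdim
  have := hA.negIndex_add_finrank_ker_add_posIndex
  omega

end IsHermitian

theorem PosSemidef.negIndex_eq_zero [DecidableEq ι] {A : Matrix ι ι ℝ} (hA : A.PosSemidef) :
    hA.1.negIndex = 0 :=
  card_eq_zero.2 (filter_eq_empty_iff.2 fun i _ => (hA.eigenvalues_nonneg i).not_gt)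

theorem finrank_ker_mulVecLin_eq_zero_of_det_ne_zero [DecidableEq ι] {A : Matrix ι ι ℝ}
    (hdet : A.det ≠ 0) :
    finrank ℝ (LinearMap.ker A.mulVecLin) = 0 := by
  rw [Submodule.finrank_eq_zero, ker_mulVecLin_eq_bot_iff]
  intro v hv
  by_contra hv0
  exact hdet (exists_mulVec_eq_zero_iff.1 ⟨v, hv0, hv⟩)

end Matrix

section HermitianPath

variable {ι : Type*} [Fintype ι] [DecidableEq ι] {H : ℝ → Matrix ι ι ℝ}
  (hH : ∀ t, (H t).IsHermitian)

theorem negIndex_le_negIndex_add_finrank_ker_of_det_ne_zero {a b : ℝ} (hab : a ≤ b)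
    (hcont : ContinuousOn H (Set.Icc a b)) (hdet : ∀ t ∈ Set.Ioo a b, (H t).det ≠ 0) :
    (hH b).negIndex ≤ (hH a).negIndex + finrank ℝ (LinearMap.ker (H a).mulVecLin) := by
  rcases hab.eq_or_lt with rfl | hab
  · exact Nat.le_add_right _ _
  set f := fun t => (hH t).negIndex
  have hloc : ∀ t ∈ Set.Icc a b, ∀ᶠ s in 𝓝[Set.Icc a b] t,
      f t ≤ f s ∧ f s ≤ f t + finrank ℝ (LinearMap.ker (H t).mulVecLin) := fun t ht =>
    ((hcont t ht).eventually ((hH t).eventually_negIndex_le.and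
      (hH t).eventually_negIndex_le_negIndex_add_finrank_ker)).mono fun s hs =>
        ⟨hs.1 (hH s), hs.2 (hH s)⟩
  have hf_cont : ContinuousOn f (Set.Ioo a b) := fun t ht => by
    refine ContinuousAt.continuousWithinAt ?_
    rw [ContinuousAt, nhds_discrete ℕ, tendsto_pure]
    have hnhds := nhdsWithin_eq_nhds.2 (Icc_mem_nhds ht.1 ht.2)
    filter_upwards [hnhds ▸ hloc t (Set.Ioo_subset_Icc_self ht)] with s hs
    rw [finrank_ker_mulVecLin_eq_zero_of_det_ne_zero (hdet t ht), add_zero] at hs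
    exact le_antisymm hs.2 hs.1
  have hIoo_near : ∀ t ∈ Set.Icc a b, (𝓝[Set.Ioo a b] t).NeBot →
      ∃ s ∈ Set.Ioo a b, f t ≤ f s ∧ f s ≤ f t + finrank ℝ (LinearMap.ker (H t).mulVecLin) :=
    fun t ht _ => (((hloc t ht).filter_mono (nhdsWithin_mono t Set.Ioo_subset_Icc_self)).and
      self_mem_nhdsWithin).exists.imp fun s hs => ⟨hs.2, hs.1⟩
  obtain ⟨s, hs, hbs, -⟩ := hIoo_near b ⟨hab.le, le_rfl⟩ (right_nhdsWithin_Ioo_neBot hab)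
  obtain ⟨s', hs', -, hs'a⟩ := hIoo_near a ⟨le_rfl, hab.le⟩ (left_nhdsWithin_Ioo_neBot hab)
  calc f b ≤ f s := hbs
    _ = f s' := isPreconnected_Ioo.constant hf_cont hs hs'
    _ ≤ _ := hs'a

theorem negIndex_le_sum_finrank_ker (hpsd : (H 0).PosSemidef) (S : Finset ℝ) {T : ℝ} (hT : 0 ≤ T)
    (hcont : ContinuousOn H (Set.Icc 0 T)) (hS : ∀ t ∈ S, t ∈ Set.Ico 0 T)
    (hsing : ∀ t ∈ Set.Ico 0 T, (H t).det = 0 → t ∈ S) :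
    (hH T).negIndex ≤ ∑ t ∈ S, finrank ℝ (LinearMap.ker (H t).mulVecLin) := by
  induction S using Finset.induction_on_max generalizing T with
  | empty =>
    rcases hT.eq_or_lt with rfl | hT
    · exact hpsd.negIndex_eq_zero.le
    · have hdet0 : (H 0).det ≠ 0 := fun h => by simpa using hsing 0 ⟨le_rfl, hT⟩ h
      simpa [hpsd.negIndex_eq_zero, finrank_ker_mulVecLin_eq_zero_of_det_ne_zero hdet0] using
        negIndex_le_negIndex_add_finrank_ker_of_det_ne_zero hH hT.le hcont
          fun t ht h => by simpa using hsing t ⟨ht.1.le, ht.2⟩ h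
  | insert a S hlt ih =>
    obtain ⟨ha0, haT⟩ := hS a (mem_insert_self a S)
    have hIH := ih ha0 (hcont.mono (Set.Icc_subset_Icc_right haT.le))
      (fun t ht => ⟨(hS t (mem_insert_of_mem ht)).1, hlt t ht⟩)
      fun t ht h => ((mem_insert.1 (hsing t ⟨ht.1, ht.2.trans haT⟩ h)).resolve_left ht.2.ne)
    have hstep := negIndex_le_negIndex_add_finrank_ker_of_det_ne_zero hH haT.le
      (hcont.mono (Set.Icc_subset_Icc_left ha0)) fun t ht h => by
        rcases mem_insert.1 (hsing t ⟨ha0.trans ht.1.le, ht.2⟩ h) with rfl | htS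
        · exact ht.1.false
        · exact (hlt t htS).not_gt ht.1
    rw [sum_insert fun haS => (hlt a haS).false]
    omega

end HermitianPath

/-- Let H(t) be a family of symmetric n×n real matrices depending continuously on
t ∈ [0, t*], with H(0) positive semidefinite. If the set of times t ∈ [0, t*) at
which H(t) is singular is finite (contained in a finset S of such times), then the
number of negative eigenvalues of H(t*) (with multiplicity) is at most the sum over
t ∈ S of the dimension of the kernel of H(t). -/
theorem stmt3 (n : ℕ) (tstar : ℝ) (htstar : 0 < tstar)
    (H : ℝ → Matrix (Fin n) (Fin n) ℝ)
    (hsym : ∀ t, (H t).IsHermitian)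
    (hcont : ∀ i j : Fin n, ContinuousOn (fun t => H t i j) (Set.Icc 0 tstar))
    (hpsd : (H 0).PosSemidef)
    (S : Finset ℝ)
    (hSsub : ∀ t ∈ S, t ∈ Set.Ico 0 tstar)
    (hSall : ∀ t ∈ Set.Ico (0 : ℝ) tstar, (H t).det = 0 → t ∈ S) :
    (Finset.univ.filter fun i => (hsym tstar).eigenvalues i < 0).card ≤
      ∑ t ∈ S, Module.finrank ℝ (LinearMap.ker (H t).mulVecLin) :=
  negIndex_le_sum_finrank_ker hsym hpsd S htstar.le
    (continuousOn_pi.2 fun i => continuousOn_pi.2 (hcont i)) hSsub hSall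
end

section
/- Let M be an n×n symmetric real matrix with spectral norm at most K and at most r negative eigenvalues. Let P be the orthogonal projection onto the span of eigenvectors of a symmetric matrix N with eigenvalues at most −η < 0, where N = M + Δ for a symmetric Δ supported on rows/columns indexed by a set Q and with ‖Δ‖ ≤ K. Then the trace of the principal submatrix P_{Q,Q} satisfies Tr(P_{Q,Q}) ≥ (η/K)·Tr(P) − r. -/
/-!
Write `N = M + Δ` and pair it with `P` in the trace inner product. Since `P` projects onto
eigenvectors of `N` with eigenvalue `≤ -η`, `⟨N, P⟩ ≤ -η Tr P`. Since `0 ≤ P ≤ 1` and `M` has at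
most `r` negative eigenvalues, all `≥ -K`, `⟨M, P⟩ ≥ -K r`. Since `Δ` is supported on `Q × Q`,
`⟨Δ, P⟩ = ⟨Δ, P_Q⟩` for the compression `P_Q ⪰ 0` of `P` to `Q`, so `⟨Δ, P⟩ ≥ -K Tr P_Q`.
Adding the last two and comparing with the first gives `η Tr P ≤ K r + K Tr P_Q`.
-/

open Matrix

namespace Matrix

variable {ι : Type*} [Fintype ι] [DecidableEq ι]

section ConjDiagonal

variable {U : Matrix ι ι ℝ}

lemma star_mul_conj_diagonal_mul (hU : U ∈ unitaryGroup ι ℝ) (d : ι → ℝ) :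
    star U * (U * diagonal d * star U) * U = diagonal d := by
  have hU' : star U * U = 1 := mem_unitaryGroup_iff'.mp hU
  simp only [← mul_assoc, hU', one_mul]
  rw [mul_assoc, hU', mul_one]

lemma trace_conj_diagonal_mul (U : Matrix ι ι ℝ) (d : ι → ℝ) (B : Matrix ι ι ℝ) :
    (U * diagonal d * star U * B).trace = ∑ i, d i * (star U * B * U) i i := by
  rw [mul_assoc, trace_mul_comm]
  simp only [← mul_assoc]
  simp [trace, mul_diagonal, mul_comm]

lemma trace_conj_diagonal (hU : U ∈ unitaryGroup ι ℝ) (d : ι → ℝ) :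
    (U * diagonal d * star U).trace = ∑ i, d i := by
  rw [trace_mul_cycle, mem_unitaryGroup_iff'.mp hU, one_mul, trace_diagonal]

lemma posSemidef_conj_diagonal (U : Matrix ι ι ℝ) {d : ι → ℝ} (hd : ∀ i, 0 ≤ d i) :
    (U * diagonal d * star U).PosSemidef :=
  (PosSemidef.diagonal hd).mul_mul_conjTranspose_same U

lemma diag_conj_le_one (hU : U ∈ unitaryGroup ι ℝ) {B : Matrix ι ι ℝ}
    (hB : (1 - B).PosSemidef) (i : ι) : (star U * B * U) i i ≤ 1 := by
  have h := (hB.conjTranspose_mul_mul_same U).diag_nonneg (i := i)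
  rw [← star_eq_conjTranspose, mul_sub, mul_one, sub_mul, mem_unitaryGroup_iff'.mp hU] at h
  simpa using h

end ConjDiagonal

namespace IsHermitian

variable {A : Matrix ι ι ℝ} (hA : A.IsHermitian)

lemma eq_conj_diagonal_eigenvalues :
    A = hA.eigenvectorUnitary * diagonal hA.eigenvalues *
      star (hA.eigenvectorUnitary : Matrix ι ι ℝ) := by
  simpa using hA.spectral_theorem

lemma trace_mul_eq_sum_eigenvalues_mul (B : Matrix ι ι ℝ) :
    (A * B).trace = ∑ i, hA.eigenvalues i *
      (star (hA.eigenvectorUnitary : Matrix ι ι ℝ) * B * hA.eigenvectorUnitary) i i := by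
  conv_lhs => rw [hA.eq_conj_diagonal_eigenvalues]
  exact trace_conj_diagonal_mul _ _ B

lemma neg_mul_trace_le_trace_mul {K : ℝ} (hK : ∀ i, -K ≤ hA.eigenvalues i)
    {B : Matrix ι ι ℝ} (hB : B.PosSemidef) : -K * B.trace ≤ (A * B).trace := by
  set U : Matrix ι ι ℝ := (hA.eigenvectorUnitary : Matrix ι ι ℝ)
  have htrace : B.trace = (star U * B * U).trace := by
    rw [trace_mul_cycle, mem_unitaryGroup_iff.mp hA.eigenvectorUnitary.2, one_mul]
  rw [hA.trace_mul_eq_sum_eigenvalues_mul, htrace, trace, Finset.mul_sum]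
  exact Finset.sum_le_sum fun i _ =>
    mul_le_mul_of_nonneg_right (hK i) (hB.conjTranspose_mul_mul_same U).diag_nonneg

lemma neg_mul_card_le_trace_mul {K : ℝ} (hK : ∀ i, -K ≤ hA.eigenvalues i)
    {B : Matrix ι ι ℝ} (hB : B.PosSemidef) (hB1 : (1 - B).PosSemidef) :
    -(K * (Finset.univ.filter fun i => hA.eigenvalues i < 0).card) ≤ (A * B).trace := by
  set U : Matrix ι ι ℝ := (hA.eigenvectorUnitary : Matrix ι ι ℝ)
  have ht0 (i : ι) : 0 ≤ (star U * B * U) i i := (hB.conjTranspose_mul_mul_same U).diag_nonneg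
  have ht1 (i : ι) : (star U * B * U) i i ≤ 1 := diag_conj_le_one hA.eigenvectorUnitary.2 hB1 i
  rw [hA.trace_mul_eq_sum_eigenvalues_mul]
  calc -(K * (Finset.univ.filter fun i => hA.eigenvalues i < 0).card)
      = ∑ i ∈ Finset.univ.filter (fun i => hA.eigenvalues i < 0), -K := by simp [mul_comm]
    _ ≤ ∑ i ∈ Finset.univ.filter (fun i => hA.eigenvalues i < 0),
          hA.eigenvalues i * (star U * B * U) i i := by
        gcongr with i hi
        have hneg : hA.eigenvalues i < 0 := (Finset.mem_filter.mp hi).2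
        nlinarith [hK i, ht0 i, ht1 i]
    _ ≤ ∑ i, hA.eigenvalues i * (star U * B * U) i i := by
        refine Finset.sum_le_sum_of_subset_of_nonneg (Finset.filter_subset _ _) fun i _ hi => ?_
        exact mul_nonneg (not_lt.mp fun h => hi (by simpa using h)) (ht0 i)

noncomputable def spectralProjLE (c : ℝ) : Matrix ι ι ℝ :=
  hA.eigenvectorUnitary * diagonal (fun i => if hA.eigenvalues i ≤ c then (1 : ℝ) else 0) *
    star (hA.eigenvectorUnitary : Matrix ι ι ℝ)

lemma posSemidef_spectralProjLE (c : ℝ) : (hA.spectralProjLE c).PosSemidef :=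
  posSemidef_conj_diagonal _ fun i => by split_ifs <;> norm_num

lemma posSemidef_one_sub_spectralProjLE (c : ℝ) : (1 - hA.spectralProjLE c).PosSemidef := by
  set U : Matrix ι ι ℝ := (hA.eigenvectorUnitary : Matrix ι ι ℝ)
  have h : 1 - hA.spectralProjLE c =
      U * diagonal (fun i => if hA.eigenvalues i ≤ c then (0 : ℝ) else 1) * star U := by
    have hdiag : diagonal (fun i => if hA.eigenvalues i ≤ c then (0 : ℝ) else 1) =
        1 - diagonal (fun i => if hA.eigenvalues i ≤ c then (1 : ℝ) else 0) := by
      rw [← diagonal_one, diagonal_sub]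
      congr with i
      split_ifs <;> norm_num
    rw [hdiag, mul_sub, mul_one, sub_mul, mem_unitaryGroup_iff.mp hA.eigenvectorUnitary.2]
    rfl
  rw [h]
  exact posSemidef_conj_diagonal _ fun i => by split_ifs <;> norm_num

lemma trace_mul_spectralProjLE_le (c : ℝ) :
    (A * hA.spectralProjLE c).trace ≤ c * (hA.spectralProjLE c).trace := by
  rw [hA.trace_mul_eq_sum_eigenvalues_mul, spectralProjLE, star_mul_conj_diagonal_mul
    hA.eigenvectorUnitary.2, trace_conj_diagonal hA.eigenvectorUnitary.2, Finset.mul_sum]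
  refine Finset.sum_le_sum fun i _ => ?_
  by_cases hc : hA.eigenvalues i ≤ c <;> simp [hc]

end IsHermitian

section Compression

def coordProj (Q : Finset ι) : Matrix ι ι ℝ :=
  diagonal fun i => if i ∈ Q then 1 else 0

lemma coordProj_mul_mul_coordProj_of_support {Q : Finset ι} {Δ : Matrix ι ι ℝ}
    (hΔ : ∀ i j, Δ i j ≠ 0 → i ∈ Q ∧ j ∈ Q) : coordProj Q * Δ * coordProj Q = Δ := by
  ext i j
  by_cases h : Δ i j = 0
  · simp [coordProj, h]
  · simp [coordProj, hΔ i j h]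

lemma trace_mul_coordProj_conj_of_support {Q : Finset ι} {Δ : Matrix ι ι ℝ}
    (hΔ : ∀ i j, Δ i j ≠ 0 → i ∈ Q ∧ j ∈ Q) (B : Matrix ι ι ℝ) :
    (Δ * (coordProj Q * B * coordProj Q)).trace = (Δ * B).trace := by
  conv_rhs => rw [← coordProj_mul_mul_coordProj_of_support hΔ]
  rw [trace_mul_comm, mul_assoc (coordProj Q * B), trace_mul_comm, ← mul_assoc]

lemma trace_coordProj_conj (Q : Finset ι) (B : Matrix ι ι ℝ) :
    (coordProj Q * B * coordProj Q).trace = ∑ i ∈ Q, B i i := by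
  simp [coordProj, trace, Finset.sum_ite_mem]

lemma PosSemidef.coordProj_conj {B : Matrix ι ι ℝ} (hB : B.PosSemidef) (Q : Finset ι) :
    (coordProj Q * B * coordProj Q).PosSemidef := by
  simpa [coordProj] using hB.mul_mul_conjTranspose_same (coordProj Q)

end Compression

end Matrix

theorem stmt4_general (n r : ℕ) (K η : ℝ) (hK : 0 < K)
    (M Δ : Matrix (Fin n) (Fin n) ℝ) (Q : Finset (Fin n))
    (hM : M.IsHermitian) (hΔ : Δ.IsHermitian)
    (hMnorm : ∀ i, |hM.eigenvalues i| ≤ K)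
    (hMneg : (Finset.univ.filter fun i => hM.eigenvalues i < 0).card ≤ r)
    (hΔnorm : ∀ i, |hΔ.eigenvalues i| ≤ K)
    (hΔsupp : ∀ i j, Δ i j ≠ 0 → i ∈ Q ∧ j ∈ Q)
    (hN : (M + Δ).IsHermitian)
    (P : Matrix (Fin n) (Fin n) ℝ)
    (hP : P = (hN.eigenvectorUnitary : Matrix (Fin n) (Fin n) ℝ)
        * Matrix.diagonal (fun i => if hN.eigenvalues i ≤ -η then (1 : ℝ) else 0)
        * star (hN.eigenvectorUnitary : Matrix (Fin n) (Fin n) ℝ)) :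
    (η / K) * P.trace - r ≤ ∑ i ∈ Q, P i i := by
  replace hP : P = hN.spectralProjLE (-η) := hP
  have hP0 : P.PosSemidef := hP ▸ hN.posSemidef_spectralProjLE (-η)
  have hN_le : ((M + Δ) * P).trace ≤ -η * P.trace := hP ▸ hN.trace_mul_spectralProjLE_le (-η)
  have hM_ge : -(K * r) ≤ (M * P).trace := by
    have hcard : ((Finset.univ.filter fun i => hM.eigenvalues i < 0).card : ℝ) ≤ r := by
      exact_mod_cast hMneg
    linarith [mul_le_mul_of_nonneg_left hcard hK.le, hM.neg_mul_card_le_trace_mul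
      (fun i => (abs_le.mp (hMnorm i)).1) hP0 (hP ▸ hN.posSemidef_one_sub_spectralProjLE (-η))]
  have hΔ_ge : -K * ∑ i ∈ Q, P i i ≤ (Δ * P).trace := by
    rw [← trace_coordProj_conj, ← trace_mul_coordProj_conj_of_support hΔsupp]
    exact hΔ.neg_mul_trace_le_trace_mul (fun i => (abs_le.mp (hΔnorm i)).1)
      (hP0.coordProj_conj Q)
  rw [add_mul, trace_add] at hN_le
  rw [div_mul_eq_mul_div, sub_le_iff_le_add, div_le_iff₀ hK]
  linarith

/-- Let M be a symmetric n×n matrix with spectral norm at most K (all eigenvalues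
bounded by K in absolute value) and at most r negative eigenvalues. Let N = M + Δ
with Δ symmetric, supported on a Q×Q principal submatrix, and ‖Δ‖ ≤ K. Let P be the
spectral projection of N onto eigenvalues at most −η < 0. Then
Tr(P_{Q,Q}) ≥ (η/K)·Tr(P) − r. -/
theorem stmt4 (n r : ℕ) (K η : ℝ) (hη : 0 < η) (hK : 0 < K)
    (M Δ : Matrix (Fin n) (Fin n) ℝ) (Q : Finset (Fin n))
    (hM : M.IsHermitian) (hΔ : Δ.IsHermitian)
    (hMnorm : ∀ i, |hM.eigenvalues i| ≤ K)
    (hMneg : (Finset.univ.filter fun i => hM.eigenvalues i < 0).card ≤ r)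
    (hΔnorm : ∀ i, |hΔ.eigenvalues i| ≤ K)
    (hΔsupp : ∀ i j, Δ i j ≠ 0 → i ∈ Q ∧ j ∈ Q)
    (hN : (M + Δ).IsHermitian)
    (P : Matrix (Fin n) (Fin n) ℝ)
    (hP : P = (hN.eigenvectorUnitary : Matrix (Fin n) (Fin n) ℝ)
        * Matrix.diagonal (fun i => if hN.eigenvalues i ≤ -η then (1 : ℝ) else 0)
        * star (hN.eigenvectorUnitary : Matrix (Fin n) (Fin n) ℝ)) :
    (η / K) * P.trace - r ≤ ∑ i ∈ Q, P i i :=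
  stmt4_general n r K η hK M Δ Q hM hΔ hMnorm hMneg hΔnorm hΔsupp hN P hP
end

section
/- Let p(λ) = (λd)^{2ℓ} · ( t² − (t/(λd))·(1−λ²d²) + (1 − 2λdt + dt²)·(1 − (λ²d)^{−ℓ−1})/(1 − (λ²d)^{−1}) ). For every ε > 0 and d ≥ 1, there exist δ > 0, a constant K > 0, and α > 0 such that for λ = √((1+ε)/d), t = (1+δ)/√((1+ε)d), and ℓ = ⌈K·max(log(1/ε)/ε, 1)⌉, one has p(λ) ≤ −α. -/
lemma core17 (ε δ d P : ℝ) (hε : 0 < ε) (hδ : 0 < δ) (hd : 1 ≤ d)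
    (hδε : 4*δ + 8*δ*ε = ε^2) (hP0 : 0 ≤ P)
    (hP : (1+2*δ)*P ≤ δ*ε/(4*(1+ε))) :
    (1+δ)^2/((1+ε)*d) - (1+δ)*(1-(1+ε)*d)/((1+ε)*d)
      + ((1+δ)^2/(1+ε) - 1 - 2*δ)*((1-P)*((1+ε)/ε)) ≤ -(δ*ε/(4*(1+ε))) := by
  have hε1 : (0:ℝ) < 1+ε := by linarith
  have hd0 : (0:ℝ) < d := by linarith
  have hc : (0:ℝ) < (1+ε)*d := by positivity
  have h1 : (1+δ)^2/((1+ε)*d) - (1+δ)*(1-(1+ε)*d)/((1+ε)*d)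
      = (1+δ)*δ/((1+ε)*d) + (1+δ) := by field_simp; ring
  have h2 : (1+δ)*δ/((1+ε)*d) ≤ (1+δ)*δ/(1+ε) := by
    apply div_le_div_of_nonneg_left (by positivity) hε1
    nlinarith
  have h3 : ((1+δ)^2/(1+ε) - 1 - 2*δ)*((1-P)*((1+ε)/ε))
      = (δ^2-ε-2*δ*ε)/ε + ((ε+2*δ*ε-δ^2)/ε)*P := by field_simp; ring
  have h4 : ((ε+2*δ*ε-δ^2)/ε)*P ≤ (1+2*δ)*P := by
    apply mul_le_mul_of_nonneg_right _ hP0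
    rw [div_le_iff₀ hε]
    nlinarith
  have h5 : (1+δ)*δ/(1+ε) + (1+δ) + (δ^2-ε-2*δ*ε)/ε ≤ -(δ*ε/(2*(1+ε))) := by
    rw [← sub_nonpos]
    have e : (1+δ)*δ/(1+ε) + (1+δ) + (δ^2-ε-2*δ*ε)/ε - -(δ*ε/(2*(1+ε)))
        = ((1+δ)*δ*ε*2 + (1+δ)*ε*(1+ε)*2 + (δ^2-ε-2*δ*ε)*(1+ε)*2 + δ*ε*ε)
          / (2*ε*(1+ε)) := by field_simp; ring
    rw [e]
    apply div_nonpos_of_nonpos_of_nonneg _ (by positivity)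
    nlinarith
  have h6 : δ*ε/(4*(1+ε)) + -(δ*ε/(2*(1+ε))) ≤ -(δ*ε/(4*(1+ε))) := by
    rw [← sub_nonpos]
    have e : δ*ε/(4*(1+ε)) + -(δ*ε/(2*(1+ε))) - -(δ*ε/(4*(1+ε))) = 0 := by
      field_simp; ring
    rw [e]
  linarith

lemma aux_one_le17 (x c : ℝ) (hx : 0 < x) (hc : 1 ≤ c) (h : x^2 = c) : 1 ≤ x := by
  nlinarith

lemma aux_mul_neg17 (M a : ℝ) (hM : 1 ≤ M) (ha : 0 ≤ a) : M * (-a) ≤ -a := by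
  nlinarith

lemma aux_c17 (ε d : ℝ) (hε : 0 < ε) (hd : 1 ≤ d) : 1 ≤ (1+ε)*d := by
  nlinarith

/-- Let p(λ) = (λd)^{2ℓ}·(t² − (t/(λd))·(1−λ²d²)
+ (1 − 2λdt + dt²)·(1 − (λ²d)^{−ℓ−1})/(1 − (λ²d)^{−1})). For every ε > 0 and d ≥ 1,
there exist δ > 0, K > 0 and α > 0 such that for λ = √((1+ε)/d),
t = (1+δ)/√((1+ε)d) and ℓ = ⌈K·max(log(1/ε)/ε, 1)⌉, one has p(λ) ≤ −α. -/
theorem stmt17 (ε : ℝ) (hε : 0 < ε) (d : ℝ) (hd : 1 ≤ d) :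
    ∃ δ > (0 : ℝ), ∃ K > (0 : ℝ), ∃ α > (0 : ℝ),
      ∀ lam t : ℝ, ∀ ℓ : ℕ,
        lam = Real.sqrt ((1 + ε) / d) →
        t = (1 + δ) / Real.sqrt ((1 + ε) * d) →
        ℓ = ⌈K * max (Real.log (1 / ε) / ε) 1⌉₊ →
        (lam * d) ^ (2 * ℓ) *
            (t ^ 2 - (t / (lam * d)) * (1 - lam ^ 2 * d ^ 2) +
              (1 - 2 * lam * d * t + d * t ^ 2) *
                ((1 - ((lam ^ 2 * d)⁻¹) ^ (ℓ + 1)) / (1 - (lam ^ 2 * d)⁻¹)))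
          ≤ -α := by
  have hε1 : (0:ℝ) < 1+ε := by linarith
  have hd0 : (0:ℝ) < d := by linarith
  obtain ⟨δ, hδdef⟩ : ∃ x:ℝ, x = ε^2/(4*(1+2*ε)) := ⟨_, rfl⟩
  have hδ : 0 < δ := by rw [hδdef]; positivity
  have hδε : 4*δ + 8*δ*ε = ε^2 := by rw [hδdef]; field_simp; ring
  obtain ⟨C, hCdef⟩ : ∃ x:ℝ, x = 4*(1+ε)*(1+2*δ)/(δ*ε) := ⟨_, rfl⟩
  have hC : 0 < C := by rw [hCdef]; positivity
  obtain ⟨K, hKdef⟩ : ∃ x:ℝ, x = C/ε := ⟨_, rfl⟩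
  have hK : 0 < K := by rw [hKdef]; positivity
  refine ⟨δ, hδ, K, hK, δ*ε/(4*(1+ε)), by positivity, ?_⟩
  intro lam t ℓ hlam ht hℓ
  -- basic facts about lam
  have hlam0 : 0 < lam := by rw [hlam]; positivity
  have hlamsq : lam^2 = (1+ε)/d := by
    rw [hlam, Real.sq_sqrt (by positivity)]
  have hq : lam^2*d = 1+ε := by
    rw [hlamsq]; field_simp
  have hs2 : (lam*d)^2 = (1+ε)*d := by
    have : (lam*d)^2 = lam^2*d*d := by ring
    rw [this, hq]
  have hs0 : 0 < lam*d := by positivity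
  have hseq : lam*d = Real.sqrt ((1+ε)*d) := by
    rw [← hs2, Real.sqrt_sq hs0.le]
  -- t facts
  have ht' : t = (1+δ)/(lam*d) := by rw [ht, hseq]
  have htt : t*(lam*d) = 1+δ := by
    rw [ht']; field_simp
  -- P facts
  set P : ℝ := ((1+ε)⁻¹)^(ℓ+1) with hPdef
  have hP0 : 0 ≤ P := by positivity
  have hPle : (1+2*δ)*P ≤ δ*ε/(4*(1+ε)) := by
    have hberr : C ≤ (1+ε)^(ℓ+1) := by
      have hb : 1 + (ℓ+1:ℕ)*ε ≤ (1+ε)^(ℓ+1) := by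
        have := one_add_mul_le_pow (a := ε) (by linarith) (ℓ+1)
        linarith [this]
      have hℓK : K ≤ (ℓ:ℝ) := by
        have h1 : K * max (Real.log (1 / ε) / ε) 1 ≤ (ℓ:ℝ) := by
          rw [hℓ]; exact Nat.le_ceil _
        have h2 : K*1 ≤ K * max (Real.log (1 / ε) / ε) 1 :=
          mul_le_mul_of_nonneg_left (le_max_right _ _) hK.le
        linarith
      have : C = K*ε := by rw [hKdef]; field_simp
      have hcast : ((ℓ+1:ℕ):ℝ) = (ℓ:ℝ)+1 := by push_cast; ring
      rw [this]
      rw [hcast] at hb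
      have h3 := mul_le_mul_of_nonneg_right hℓK hε.le
      nlinarith
    have hP1 : P ≤ C⁻¹ := by
      rw [hPdef, inv_pow]
      exact (inv_le_inv₀ (by positivity) hC).mpr hberr
    have : (1+2*δ)*C⁻¹ = δ*ε/(4*(1+ε)) := by
      rw [hCdef]; field_simp
    calc (1+2*δ)*P ≤ (1+2*δ)*C⁻¹ := by
          apply mul_le_mul_of_nonneg_left hP1 (by linarith)
      _ = δ*ε/(4*(1+ε)) := this
  -- rewrite the expression
  have hgeom : (1 - ((lam ^ 2 * d)⁻¹) ^ (ℓ + 1)) / (1 - (lam ^ 2 * d)⁻¹)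
      = (1-P)*((1+ε)/ε) := by
    rw [hq, hPdef]
    have hlt : (1+ε)⁻¹ < 1 := by
      rw [inv_lt_one_iff₀]; right; linarith
    rw [div_eq_iff (by intro h; rw [sub_eq_zero] at h; exact absurd h.symm (ne_of_lt hlt))]
    field_simp
    ring
  have hB : t ^ 2 - (t / (lam * d)) * (1 - lam ^ 2 * d ^ 2) +
      (1 - 2 * lam * d * t + d * t ^ 2) *
        ((1 - ((lam ^ 2 * d)⁻¹) ^ (ℓ + 1)) / (1 - (lam ^ 2 * d)⁻¹))
      = (1+δ)^2/((1+ε)*d) - (1+δ)*(1-(1+ε)*d)/((1+ε)*d)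
        + ((1+δ)^2/(1+ε) - 1 - 2*δ)*((1-P)*((1+ε)/ε)) := by
    rw [hgeom]
    have e1 : t^2 = (1+δ)^2/((1+ε)*d) := by
      rw [ht']
      rw [div_pow, hs2]
    have e2 : t/(lam*d) = (1+δ)/((1+ε)*d) := by
      rw [ht', div_div, ← sq, hs2]
    have e3 : lam^2*d^2 = (1+ε)*d := by
      have : lam^2*d^2 = lam^2*d*d := by ring
      rw [this, hq]
    have e4 : 2*lam*d*t = 2*(1+δ) := by
      have : 2*lam*d*t = 2*(t*(lam*d)) := by ring
      rw [this, htt]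
    have e5 : d*t^2 = (1+δ)^2/(1+ε) := by
      rw [e1]; field_simp
    rw [e5, e1, e2, e3, e4]
    ring
  rw [hB]
  have hcore := core17 ε δ d P hε hδ hd hδε hP0 hPle
  have hM : (1:ℝ) ≤ (lam*d)^(2*ℓ) :=
    one_le_pow₀ (aux_one_le17 _ _ hs0 (aux_c17 ε d hε hd) hs2)
  have hα : (0:ℝ) ≤ δ*ε/(4*(1+ε)) := by positivity
  exact le_trans (mul_le_mul_of_nonneg_left hcore (pow_pos hs0 (2*ℓ)).le)
    (aux_mul_neg17 _ _ hM hα)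
end
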